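/- arXiv:2207.10074 — 4 statements merged into one kernel-verified Lean document; each statement's English description precedes it below -/
import Mathlib

section
/- Let (Ω, 𝔽, P) be a probability space, α ∈ ℝ, δ ∈ (0,1). Let R : ℝ → ℝ be nonincreasing and let Û : Ω × ℝ → ℝ be such that Û(·, λ) is measurable for each λ and P({ω : R(λ) ≤ Û(ω, λ)}) ≥ 1 − δ for every λ ∈ ℝ (pointwise upper confidence bound). For each ω suppose the set S(ω) = {λ : Û(ω, λ') ≤ α for all λ' ≥ λ} is nonempty and bounded below, define λ̂(ω) = inf S(ω), and assume λ̂ is measurable. Suppose the set {λ : R(λ) > α} is nonempty and bounded above, let λ* = sup{λ : R(λ) > α}, and assume R(λ*) ≤ α. Then P({ω : R(λ̂(ω)) > α}) ≤ δ. -/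
/-!
Since `R` is nonincreasing and `R λ* ≤ α`, the risk exceeds `α` exactly at the thresholds
`λ < λ*`. If `λ̂(ω) < λ < λ*`, then `λ` lies in the upper set `S(ω)`, so
`Û(ω, λ) ≤ α < R(λ)`: the confidence bound fails at `λ`, which has probability at most `δ`.
Exhausting `{λ̂ < λ*}` by the increasing events `{λ̂ < λₙ}` for a sequence `λₙ ↑ λ*`,
continuity of `P` from below gives the same bound for `{λ̂ < λ*}`.
-/

open MeasureTheory Set

theorem Antitone.lt_apply_iff_lt_csSup {β γ : Type*} [ConditionallyCompleteLinearOrder β]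
    [LinearOrder γ] {R : β → γ} (hR : Antitone R) {α : γ}
    (hne : {x | α < R x}.Nonempty) (hbdd : BddAbove {x | α < R x})
    (hsup : R (sSup {x | α < R x}) ≤ α) (x : β) :
    α < R x ↔ x < sSup {x | α < R x} := by
  constructor
  · intro hx
    refine (le_csSup hbdd hx).lt_of_ne ?_
    rintro rfl
    exact hsup.not_gt hx
  · intro hx
    obtain ⟨y, hy, hxy⟩ := exists_lt_of_lt_csSup hne hx
    exact hy.trans_le (hR hxy.le)

theorem IsUpperSet.mem_of_csInf_lt {β : Type*} [ConditionallyCompleteLinearOrder β] {s : Set β}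
    (hs : IsUpperSet s) (hne : s.Nonempty) {c : β} (hc : sInf s < c) : c ∈ s := by
  obtain ⟨a, ha, hac⟩ := exists_lt_of_csInf_lt hne hc
  exact hs hac.le ha

theorem isUpperSet_setOf_forall_ge_le {β γ : Type*} [Preorder β] [LE γ] (f : β → γ) (α : γ) :
    IsUpperSet {x | ∀ y ≥ x, f y ≤ α} :=
  fun _ _ hab ha y hy => ha y (hab.trans hy)

theorem MeasureTheory.prob_compl_le_of_one_sub_le {Ω : Type*} [MeasurableSpace Ω]
    {μ : Measure Ω} [IsProbabilityMeasure μ] {s : Set Ω} (hs : MeasurableSet s)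
    {ε : ENNReal} (h : 1 - ε ≤ μ s) : μ sᶜ ≤ ε := by
  rw [prob_compl_eq_one_sub hs]
  exact tsub_le_iff_tsub_le.mpr h

theorem MeasureTheory.measure_lt_le_of_forall_lt {Ω β : Type*} [MeasurableSpace Ω]
    [LinearOrder β] [TopologicalSpace β] [OrderTopology β] [DenselyOrdered β] [NoMinOrder β]
    [FirstCountableTopology β] (μ : Measure Ω) (f : Ω → β) (x : β) {ε : ENNReal}
    (h : ∀ c < x, μ {ω | f ω < c} ≤ ε) : μ {ω | f ω < x} ≤ ε := by
  obtain ⟨u, hu_mono, hu_lt, hu_lim⟩ := exists_seq_strictMono_tendsto x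
  have hunion : f ⁻¹' Iio x = ⋃ n, f ⁻¹' Iio (u n) := by
    rw [← (isLUB_of_tendsto_atTop hu_mono.monotone hu_lim).iUnion_Iio_eq, preimage_iUnion]
  have hmono : Monotone fun n => f ⁻¹' Iio (u n) :=
    fun _ _ hmn => preimage_mono (Iio_subset_Iio (hu_mono.monotone hmn))
  change μ (f ⁻¹' Iio x) ≤ ε
  rw [hunion, hmono.measure_iUnion]
  exact iSup_le fun n => h _ (hu_lt n)

theorem calibrated_threshold_controls_risk_general
    {Ω : Type*} [MeasurableSpace Ω] (P : Measure Ω) [IsProbabilityMeasure P]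
    (α δ : ℝ)
    (R : ℝ → ℝ) (hR : Antitone R)
    (U : Ω → ℝ → ℝ) (hUmeas : ∀ lam : ℝ, Measurable fun ω => U ω lam)
    (hUCB : ∀ lam : ℝ, P {ω | R lam ≤ U ω lam} ≥ 1 - ENNReal.ofReal δ)
    (S : Ω → Set ℝ) (hSdef : ∀ ω, S ω = {lam | ∀ lam' ≥ lam, U ω lam' ≤ α})
    (hSne : ∀ ω, (S ω).Nonempty)
    (lamHat : Ω → ℝ) (hlamHat : ∀ ω, lamHat ω = sInf (S ω))
    (hne : {lam | R lam > α}.Nonempty) (hbdd : BddAbove {lam | R lam > α})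
    (lamStar : ℝ) (hlamStar : lamStar = sSup {lam | R lam > α})
    (hRstar : R lamStar ≤ α) :
    P {ω | R (lamHat ω) > α} ≤ ENNReal.ofReal δ := by
  obtain rfl : lamHat = fun ω => sInf (S ω) := funext hlamHat
  have hrisk : ∀ lam, α < R lam ↔ lam < lamStar :=
    hlamStar ▸ hR.lt_apply_iff_lt_csSup hne hbdd (hlamStar ▸ hRstar)
  have hbelow : ∀ c < lamStar, P {ω | sInf (S ω) < c} ≤ ENNReal.ofReal δ := by
    intro c hc
    have hfail : {ω | sInf (S ω) < c} ⊆ {ω | R c ≤ U ω c}ᶜ := by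
      intro ω hω hRU
      have hupper : IsUpperSet (S ω) := hSdef ω ▸ isUpperSet_setOf_forall_ge_le _ α
      have hcS := hupper.mem_of_csInf_lt (hSne ω) hω
      rw [hSdef] at hcS
      exact ((hrisk c).mpr hc).not_ge (hRU.trans (hcS c le_rfl))
    exact (measure_mono hfail).trans <| prob_compl_le_of_one_sub_le
      (measurableSet_le measurable_const (hUmeas c)) (hUCB c)
  simp only [gt_iff_lt, hrisk]
  exact measure_lt_le_of_forall_lt P (fun ω => sInf (S ω)) lamStar hbelow

/-- Abstract calibration theorem for risk-controlling prediction sets: if `R` is a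
nonincreasing risk function, `U` is a pointwise `1 - δ` upper confidence bound for `R`,
and `lamHat ω` is the infimum of the set of `λ` such that `U ω` stays below `α` on
`[λ, ∞)`, then the risk at the calibrated threshold exceeds `α` with probability
at most `δ`. -/
theorem calibrated_threshold_controls_risk
    {Ω : Type*} [MeasurableSpace Ω] (P : Measure Ω) [IsProbabilityMeasure P]
    (α δ : ℝ) (hδ : δ ∈ Set.Ioo (0 : ℝ) 1)
    (R : ℝ → ℝ) (hR : Antitone R)
    (U : Ω → ℝ → ℝ) (hUmeas : ∀ lam : ℝ, Measurable fun ω => U ω lam)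
    (hUCB : ∀ lam : ℝ, P {ω | R lam ≤ U ω lam} ≥ 1 - ENNReal.ofReal δ)
    (S : Ω → Set ℝ) (hSdef : ∀ ω, S ω = {lam | ∀ lam' ≥ lam, U ω lam' ≤ α})
    (hSne : ∀ ω, (S ω).Nonempty) (hSbdd : ∀ ω, BddBelow (S ω))
    (lamHat : Ω → ℝ) (hlamHat : ∀ ω, lamHat ω = sInf (S ω))
    (hlamHatMeas : Measurable lamHat)
    (hne : {lam | R lam > α}.Nonempty) (hbdd : BddAbove {lam | R lam > α})
    (lamStar : ℝ) (hlamStar : lamStar = sSup {lam | R lam > α})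
    (hRstar : R lamStar ≤ α) :
    P {ω | R (lamHat ω) > α} ≤ ENNReal.ofReal δ :=
  calibrated_threshold_controls_risk_general P α δ R hR U hUmeas hUCB S hSdef hSne lamHat hlamHat
    hne hbdd lamStar hlamStar hRstar
end

section
/- Let (Ω, 𝔽, P) be a probability space, α ∈ ℝ, δ ∈ (0,1), R : ℝ → ℝ nonincreasing, and Û : Ω × ℝ → ℝ with Û(·, λ) measurable for each λ. For each ω suppose S(ω) = {λ : Û(ω, λ') ≤ α for all λ' ≥ λ} is nonempty and bounded below, set λ̂(ω) = inf S(ω), and assume λ̂ is measurable. Then for any fixed λ° ∈ ℝ with R(λ°) > α, the inclusion {ω : λ̂(ω) < λ°} ⊆ {ω : Û(ω, λ°) < R(λ°)} holds; consequently, if P({ω : R(λ°) ≤ Û(ω, λ°)}) ≥ 1 − δ, then P({ω : λ̂(ω) < λ°}) ≤ δ. -/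
open MeasureTheory

/-- Key inclusion step in the calibration proof: for a fixed `λ°` with `R λ° > α`,
the event `{lamHat < λ°}` is contained in the event `{U(·, λ°) < R λ°}`; hence if
`U(·, λ°)` is a `1 - δ` upper confidence bound for `R λ°`, then
`P(lamHat < λ°) ≤ δ`. -/
theorem threshold_below_implies_ucb_fails
    {Ω : Type*} [MeasurableSpace Ω] (P : Measure Ω) [IsProbabilityMeasure P]
    (α δ : ℝ) (hδ : δ ∈ Set.Ioo (0 : ℝ) 1)
    (R : ℝ → ℝ) (hR : Antitone R)
    (U : Ω → ℝ → ℝ) (hUmeas : ∀ lam : ℝ, Measurable fun ω => U ω lam)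
    (S : Ω → Set ℝ) (hSdef : ∀ ω, S ω = {lam | ∀ lam' ≥ lam, U ω lam' ≤ α})
    (hSne : ∀ ω, (S ω).Nonempty) (hSbdd : ∀ ω, BddBelow (S ω))
    (lamHat : Ω → ℝ) (hlamHat : ∀ ω, lamHat ω = sInf (S ω))
    (hlamHatMeas : Measurable lamHat)
    (lam0 : ℝ) (hlam0 : R lam0 > α) :
    {ω | lamHat ω < lam0} ⊆ {ω | U ω lam0 < R lam0} ∧
      (P {ω | R lam0 ≤ U ω lam0} ≥ 1 - ENNReal.ofReal δ →
        P {ω | lamHat ω < lam0} ≤ ENNReal.ofReal δ) := by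
  have hsub : {ω | lamHat ω < lam0} ⊆ {ω | U ω lam0 < R lam0} := by
    intro ω hω
    simp only [Set.mem_setOf_eq] at hω ⊢
    rw [hlamHat ω] at hω
    obtain ⟨lam, hlamS, hlamlt⟩ := exists_lt_of_csInf_lt (hSne ω) hω
    rw [hSdef ω] at hlamS
    have := hlamS lam0 (le_of_lt hlamlt)
    linarith
  refine ⟨hsub, fun hP => ?_⟩
  have hmeas : MeasurableSet {ω | U ω lam0 < R lam0} :=
    measurableSet_lt (hUmeas lam0) measurable_const
  have hcompl : {ω | U ω lam0 < R lam0} = {ω | R lam0 ≤ U ω lam0}ᶜ := by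
    ext ω; simp [not_le]
  calc P {ω | lamHat ω < lam0} ≤ P {ω | U ω lam0 < R lam0} := measure_mono hsub
    _ = 1 - P {ω | R lam0 ≤ U ω lam0} := by
        rw [hcompl, measure_compl (by rw [hcompl] at hmeas; simpa using hmeas)
          (measure_ne_top P _), measure_univ]
    _ ≤ 1 - (1 - ENNReal.ofReal δ) := tsub_le_tsub_left hP 1
    _ ≤ ENNReal.ofReal δ := by
        rw [ENNReal.sub_sub_cancel ENNReal.one_ne_top (by simp [ENNReal.ofReal_le_one, hδ.2.le])]
end

section
/- Let 𝒳 be a measurable space, D ≥ 1, and f, q_lo, q_hi : 𝒳 → ℝ^D measurable. For λ ≥ 0 and x ∈ 𝒳, define for each d ∈ {1,…,D} the interval T_λ(x)_d = [f(x)_d − λ·max(f(x)_d − q_lo(x)_d, 0), f(x)_d + λ·max(q_hi(x)_d − f(x)_d, 0)], and for z ∈ ℝ^D the loss ℓ_λ(x, z) = 1 − (1/D)·|{d : z_d ∈ T_λ(x)_d}|. Let (X₁, Z₁), …, (Xₙ, Zₙ), (X, Z) be i.i.d. with law μ on 𝒳 × ℝ^D; let R(λ) = E_μ[ℓ_λ(X,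 Z)], and for α ∈ (0,1), δ ∈ (0,1) define the (random) upper confidence bound R̂⁺(λ) = (1/n)∑_{i=1}^n ℓ_λ(Xᵢ, Zᵢ) + √(log(1/δ)/(2n)) and the calibrated threshold λ̂ = inf{λ ≥ 0 : R̂⁺(λ') ≤ α for all λ' ≥ λ}, assumed almost surely to be the infimum of a nonempty set. Suppose {λ ≥ 0 : R(λ) > α} is nonempty and bounded above, with λ* = sup{λ ≥ 0 : R(λ) > α} satisfying R(λ*) ≤ α. Then, with probability at least 1 − δ over the calibration sample, R(λ̂) ≤ α; that is, with probability at least 1 − δ, E[(1/D)·|{d : Z_d ∈ T_λ̂(X)_d}|] ≥ 1 − α. -/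
open MeasureTheory ProbabilityTheory
open scoped Classical

/-! For a fixed `λ` with `R λ > α`, Hoeffding's inequality bounds by `δ` the probability that
the upper confidence bound `R̂⁺ λ` drops to `α`. If `R λ̂ > α`, then `λ̂ < λ*`, so `λ̂` lies below
a term `λₖ` of a fixed increasing sequence in `{λ ≥ 0 | R λ > α}` converging to `λ*`, and then
`R̂⁺ λ' ≤ α` for all `λ' ≥ λₖ`. These events increase with `k`, so their union, which contains
the failure event up to a null set, still has probability at most `δ`. -/

open Finset Real
open scoped ENNReal

section Hoeffding

variable {Ω : Type*} [MeasurableSpace Ω] {P : Measure Ω} [IsProbabilityMeasure P]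

theorem measure_mean_add_sqrt_log_le_le {n : ℕ} (hn : 0 < n) {X : Fin n → Ω → ℝ}
    (hXm : ∀ i, AEMeasurable (X i) P) (hindep : iIndepFun X P)
    (hX01 : ∀ i, ∀ᵐ ω ∂P, X i ω ∈ Set.Icc 0 1) {p : ℝ} (hmean : ∀ i, P[X i] = p)
    {α δ : ℝ} (hδ0 : 0 < δ) (hδ1 : δ ≤ 1) (hαp : α ≤ p) :
    P {ω | (∑ i, X i ω) / n + √(log (1 / δ) / (2 * n)) ≤ α} ≤ ENNReal.ofReal δ := by
  -- the centred variables `p - X i` are `1/4`-sub-Gaussian, and `ε = n b` makes Hoeffding's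
  -- bound `exp (-2 ε ^ 2 / n)` equal to `δ`
  set b := √(log (1 / δ) / (2 * n))
  have hn' : (0 : ℝ) < n := Nat.cast_pos.2 hn
  have hb2 : (n * b) ^ 2 = n * log (1 / δ) / 2 := by
    rw [mul_pow, sq_sqrt (div_nonneg (log_nonneg (one_le_one_div hδ0 hδ1)) (by positivity))]
    field_simp
  have hsubG : ∀ i ∈ (univ : Finset (Fin n)),
      HasSubgaussianMGF (fun ω ↦ p - X i ω) ((‖(1 : ℝ) - 0‖₊ / 2) ^ 2) P := fun i _ ↦ by
    refine (hasSubgaussianMGF_of_mem_Icc (hXm i) (hX01 i)).neg.congr (ae_of_all _ fun ω ↦ ?_)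
    simp [hmean i]
  have hindep' : iIndepFun (fun i ω ↦ p - X i ω) P :=
    hindep.comp (fun _ x ↦ p - x) fun _ ↦ measurable_const.sub measurable_id
  have hevent : {ω | (∑ i, X i ω) / n + b ≤ α} ⊆ {ω | n * b ≤ ∑ i, (p - X i ω)} := by
    intro ω hω
    simp only [Set.mem_ofPred_eq, sum_sub_distrib, sum_const, card_univ, Fintype.card_fin,
      nsmul_eq_mul] at hω ⊢
    have := (div_le_iff₀ hn').1 (le_sub_iff_add_le.2 hω)
    nlinarith
  have hreal := HasSubgaussianMGF.measure_sum_ge_le_of_iIndepFun hindep' hsubG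
    (by positivity : 0 ≤ (n : ℝ) * b)
  rw [ENNReal.le_ofReal_iff_toReal_le (measure_ne_top _ _) hδ0.le]
  calc P.real {ω | (∑ i, X i ω) / n + b ≤ α}
      ≤ P.real {ω | n * b ≤ ∑ i, (p - X i ω)} := measureReal_mono hevent
    _ ≤ _ := hreal
    _ = δ := by
      rw [hb2]
      simp only [one_div, log_inv, sub_zero, nnnorm_one, sum_const, card_univ,
        Fintype.card_fin, nsmul_eq_mul]
      convert exp_log hδ0 using 2
      push_cast
      field_simp

end Hoeffding

section Calibration

variable {R : ℝ → ℝ} {α : ℝ}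

lemma sInf_lt_sSup_of_lt_risk {r : ℝ → ℝ}
    (hne : {lam | 0 ≤ lam ∧ ∀ lam' ≥ lam, r lam' ≤ α}.Nonempty)
    (hR : α < R (sInf {lam | 0 ≤ lam ∧ ∀ lam' ≥ lam, r lam' ≤ α}))
    (hRbdd : BddAbove {lam | 0 ≤ lam ∧ α < R lam})
    (hRstar : R (sSup {lam | 0 ≤ lam ∧ α < R lam}) ≤ α) :
    sInf {lam | 0 ≤ lam ∧ ∀ lam' ≥ lam, r lam' ≤ α} < sSup {lam | 0 ≤ lam ∧ α < R lam} := by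
  have hmem : sInf {lam | 0 ≤ lam ∧ ∀ lam' ≥ lam, r lam' ≤ α} ∈ {lam | 0 ≤ lam ∧ α < R lam} :=
    ⟨le_csInf hne fun _ h ↦ h.1, hR⟩
  refine (le_csSup hRbdd hmem).lt_of_ne fun h ↦ ?_
  rw [h] at hR
  exact hRstar.not_gt hR

theorem measure_lt_risk_sInf_le {Ω : Type*} [MeasurableSpace Ω] {P : Measure Ω}
    {Rhat : Ω → ℝ → ℝ} {ε : ℝ≥0∞}
    (hpoint : ∀ lam, 0 ≤ lam → α < R lam → P {ω | Rhat ω lam ≤ α} ≤ ε)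
    (hne : ∀ᵐ ω ∂P, {lam | 0 ≤ lam ∧ ∀ lam' ≥ lam, Rhat ω lam' ≤ α}.Nonempty)
    (hRne : {lam | 0 ≤ lam ∧ α < R lam}.Nonempty)
    (hRbdd : BddAbove {lam | 0 ≤ lam ∧ α < R lam})
    (hRstar : R (sSup {lam | 0 ≤ lam ∧ α < R lam}) ≤ α) :
    P {ω | α < R (sInf {lam | 0 ≤ lam ∧ ∀ lam' ≥ lam, Rhat ω lam' ≤ α})} ≤ ε := by
  obtain ⟨u, hu_mono, hu_tendsto, hu_mem⟩ := exists_seq_tendsto_sSup hRne hRbdd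
  set A : ℕ → Set Ω := fun k ↦ {ω | ∀ lam' ≥ u k, Rhat ω lam' ≤ α}
  have hA_mono : Monotone A := fun k l hkl ω hω lam' hlam' ↦ hω lam' ((hu_mono hkl).trans hlam')
  have hcover : ∀ᵐ ω ∂P,
      ω ∈ {ω | α < R (sInf {lam | 0 ≤ lam ∧ ∀ lam' ≥ lam, Rhat ω lam' ≤ α})} → ω ∈ ⋃ k, A k := by
    filter_upwards [hne] with ω hω hR
    obtain ⟨k, hk⟩ :=
      (hu_tendsto.eventually (lt_mem_nhds (sInf_lt_sSup_of_lt_risk hω hR hRbdd hRstar))).exists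
    obtain ⟨lam, hlam, hlam_lt⟩ := exists_lt_of_csInf_lt hω hk
    exact Set.mem_iUnion.2 ⟨k, fun lam' hlam' ↦ hlam.2 lam' (hlam_lt.le.trans hlam')⟩
  calc P {ω | α < R (sInf {lam | 0 ≤ lam ∧ ∀ lam' ≥ lam, Rhat ω lam' ≤ α})}
      ≤ P (⋃ k, A k) := measure_mono_ae hcover
    _ = ⨆ k, P (A k) := hA_mono.measure_iUnion
    _ ≤ ε := iSup_le fun k ↦ calc
      P (A k) ≤ P {ω | Rhat ω (u k) ≤ α} := measure_mono fun _ hω ↦ hω (u k) le_rfl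
      _ ≤ ε := hpoint (u k) (hu_mem k).1 (hu_mem k).2

end Calibration

lemma measurable_card_filter {E ι : Type*} [MeasurableSpace E] [Fintype ι] {p : ι → E → Prop}
    (hp : ∀ i, MeasurableSet {a | p i a}) :
    Measurable fun a ↦ ((univ.filter fun i ↦ p i a).card : ℝ) := by
  simp_rw [card_filter]
  push_cast
  exact Finset.measurable_sum _ fun i _ ↦ Measurable.ite (hp i) measurable_const measurable_const

lemma card_div_mem_Icc {D : ℕ} (s : Finset (Fin D)) : (s.card : ℝ) / D ∈ Set.Icc 0 1 := by
  refine ⟨by positivity, div_le_one_of_le₀ ?_ D.cast_nonneg⟩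
  exact_mod_cast (card_le_univ s).trans_eq (Fintype.card_fin D)

theorem rcps_semantic_intervals_general
    {𝒳 : Type*} [MeasurableSpace 𝒳] {Ω : Type*} [MeasurableSpace Ω]
    (P : Measure Ω) [IsProbabilityMeasure P]
    (D : ℕ)
    (f qlo qhi : 𝒳 → Fin D → ℝ)
    (hf : Measurable f) (hqlo : Measurable qlo) (hqhi : Measurable qhi)
    (T : ℝ → 𝒳 → Fin D → Set ℝ)
    (hT : ∀ lam x d, T lam x d =
      Set.Icc (f x d - lam * max (f x d - qlo x d) 0)
              (f x d + lam * max (qhi x d - f x d) 0))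
    (loss : ℝ → 𝒳 → (Fin D → ℝ) → ℝ)
    (hloss : ∀ lam x z, loss lam x z =
      1 - ((Finset.univ.filter fun d => z d ∈ T lam x d).card : ℝ) / D)
    (μ : Measure (𝒳 × (Fin D → ℝ))) [IsProbabilityMeasure μ]
    (n : ℕ) (hn : 0 < n)
    (W : Fin n → Ω → 𝒳 × (Fin D → ℝ))
    (hWmeas : ∀ i, Measurable (W i))
    (hWindep : iIndepFun W P)
    (hWlaw : ∀ i, Measure.map (W i) P = μ)
    (R : ℝ → ℝ) (hR : ∀ lam, R lam = ∫ w, loss lam w.1 w.2 ∂μ)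
    (α δ : ℝ) (hδ : δ ∈ Set.Ioo (0 : ℝ) 1)
    (Rhat : Ω → ℝ → ℝ)
    (hRhat : ∀ ω lam, Rhat ω lam =
      (∑ i, loss lam (W i ω).1 (W i ω).2) / n + Real.sqrt (Real.log (1 / δ) / (2 * n)))
    (lamHat : Ω → ℝ)
    (hlamHat : ∀ ω, lamHat ω = sInf {lam | 0 ≤ lam ∧ ∀ lam' ≥ lam, Rhat ω lam' ≤ α})
    (hne : ∀ᵐ ω ∂P, {lam | 0 ≤ lam ∧ ∀ lam' ≥ lam, Rhat ω lam' ≤ α}.Nonempty)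
    (hRne : {lam | 0 ≤ lam ∧ R lam > α}.Nonempty)
    (hRbdd : BddAbove {lam | 0 ≤ lam ∧ R lam > α})
    (hRstar : R (sSup {lam | 0 ≤ lam ∧ R lam > α}) ≤ α) :
    P {ω | R (lamHat ω) ≤ α} ≥ 1 - ENNReal.ofReal δ := by
  set L : ℝ → 𝒳 × (Fin D → ℝ) → ℝ := fun lam w ↦ loss lam w.1 w.2
  have hL01 : ∀ lam w, L lam w ∈ Set.Icc 0 1 := fun lam w ↦ by
    obtain ⟨h0, h1⟩ := card_div_mem_Icc (univ.filter fun d ↦ w.2 d ∈ T lam w.1 d)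
    simp only [L, hloss, Set.mem_Icc]
    constructor <;> linarith
  have hLmeas : ∀ lam, Measurable (L lam) := fun lam ↦ by
    simp only [L, hloss]
    refine measurable_const.sub ((measurable_card_filter fun d ↦ ?_).div_const _)
    simp only [hT, Set.mem_Icc, Set.ofPred_and]
    exact (measurableSet_le (by fun_prop) (by fun_prop)).inter
      (measurableSet_le (by fun_prop) (by fun_prop))
  have hpoint : ∀ lam, 0 ≤ lam → α < R lam → P {ω | Rhat ω lam ≤ α} ≤ ENNReal.ofReal δ := by
    intro lam _ hlam
    simp only [hRhat]
    refine measure_mean_add_sqrt_log_le_le hn (X := fun i ω ↦ L lam (W i ω))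
      (fun i ↦ ((hLmeas lam).comp (hWmeas i)).aemeasurable)
      (hWindep.comp _ fun _ ↦ hLmeas lam) (fun i ↦ ae_of_all _ fun ω ↦ hL01 lam _)
      (fun i ↦ ?_) hδ.1 hδ.2.le hlam.le
    rw [hR, ← hWlaw i, integral_map (hWmeas i).aemeasurable (hLmeas lam).aestronglyMeasurable]
  have hfail := measure_lt_risk_sInf_le hpoint hne hRne hRbdd hRstar
  simp only [← hlamHat] at hfail
  have hcompl : {ω | R (lamHat ω) ≤ α}ᶜ = {ω | α < R (lamHat ω)} := by ext; simp
  rw [ge_iff_le, tsub_le_iff_right, ← measure_univ (μ := P)]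
  exact (measure_univ_le_add_compl _).trans (add_le_add le_rfl (hcompl ▸ hfail))

/-- Proposition 1 of the paper (`𝒯_λ̂` is an RCPS): the multiplicatively-scaled
coordinatewise intervals `T λ x d`, calibrated by choosing the smallest `λ̂` such that
the Hoeffding upper confidence bound of the false negative rate stays below `α` on
`[λ̂, ∞)`, control the risk `R` at level `α` with probability at least `1 - δ` over
the i.i.d. calibration sample. -/
theorem rcps_semantic_intervals
    {𝒳 : Type*} [MeasurableSpace 𝒳] {Ω : Type*} [MeasurableSpace Ω]
    (P : Measure Ω) [IsProbabilityMeasure P]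
    (D : ℕ) (hD : 1 ≤ D)
    (f qlo qhi : 𝒳 → Fin D → ℝ)
    (hf : Measurable f) (hqlo : Measurable qlo) (hqhi : Measurable qhi)
    (T : ℝ → 𝒳 → Fin D → Set ℝ)
    (hT : ∀ lam x d, T lam x d =
      Set.Icc (f x d - lam * max (f x d - qlo x d) 0)
              (f x d + lam * max (qhi x d - f x d) 0))
    (loss : ℝ → 𝒳 → (Fin D → ℝ) → ℝ)
    (hloss : ∀ lam x z, loss lam x z =
      1 - ((Finset.univ.filter fun d => z d ∈ T lam x d).card : ℝ) / D)
    (μ : Measure (𝒳 × (Fin D → ℝ))) [IsProbabilityMeasure μ]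
    (n : ℕ) (hn : 0 < n)
    (W : Fin n → Ω → 𝒳 × (Fin D → ℝ))
    (hWmeas : ∀ i, Measurable (W i))
    (hWindep : iIndepFun W P)
    (hWlaw : ∀ i, Measure.map (W i) P = μ)
    (R : ℝ → ℝ) (hR : ∀ lam, R lam = ∫ w, loss lam w.1 w.2 ∂μ)
    (α δ : ℝ) (hα : α ∈ Set.Ioo (0 : ℝ) 1) (hδ : δ ∈ Set.Ioo (0 : ℝ) 1)
    (Rhat : Ω → ℝ → ℝ)
    (hRhat : ∀ ω lam, Rhat ω lam =
      (∑ i, loss lam (W i ω).1 (W i ω).2) / n + Real.sqrt (Real.log (1 / δ) / (2 * n)))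
    (lamHat : Ω → ℝ)
    (hlamHat : ∀ ω, lamHat ω = sInf {lam | 0 ≤ lam ∧ ∀ lam' ≥ lam, Rhat ω lam' ≤ α})
    (hne : ∀ᵐ ω ∂P, {lam | 0 ≤ lam ∧ ∀ lam' ≥ lam, Rhat ω lam' ≤ α}.Nonempty)
    (hRne : {lam | 0 ≤ lam ∧ R lam > α}.Nonempty)
    (hRbdd : BddAbove {lam | 0 ≤ lam ∧ R lam > α})
    (hRstar : R (sSup {lam | 0 ≤ lam ∧ R lam > α}) ≤ α) :
    P {ω | R (lamHat ω) ≤ α} ≥ 1 - ENNReal.ofReal δ :=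
  rcps_semantic_intervals_general P D f qlo qhi hf hqlo hqhi T hT loss hloss μ n hn W hWmeas hWindep
    hWlaw R hR α δ hδ Rhat hRhat lamHat hlamHat hne hRne hRbdd hRstar
end

section
/- Let β ∈ (0,1), let Z be an integrable real-valued random variable, and define the quantile loss ℒ^β(q, z) = β(z − q) if z > q and (1 − β)(q − z) if z ≤ q. Then q ∈ ℝ minimizes the map q ↦ E[ℒ^β(q, Z)] if and only if P(Z < q) ≤ β and P(Z ≤ q) ≥ β. -/
/-!
Write `F(a) = P(Z ≤ a)` and `f(r) = E[ℒ^β(r, Z)]`. For `a ≤ b` the increment of the loss is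
squeezed pointwise between `(b - a)(1{Z ≤ a} - β)` and `(b - a)(1{Z < b} - β)`, so
`(b - a)(F(a) - β) ≤ f(b) - f(a) ≤ (b - a)(F(b⁻) - β)`, where `F(b⁻) = P(Z < b)`.
If `F(q⁻) ≤ β ≤ F(q)`, these bounds show that `f` does not decrease to the right of `q` nor
increase to its left. Conversely, if `F(q⁻) > β` (resp. `F(q) < β`), continuity of `F` from the
left at `q` (resp. from the right) provides `a < q` with `F(a) > β` (resp. `b > q` with
`F(b⁻) ≤ F(b) < β`), and the bounds give `f(a) < f(q)` (resp. `f(b) < f(q)`).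
-/

open MeasureTheory ProbabilityTheory Set

noncomputable def pinballLoss (β q z : ℝ) : ℝ :=
  if q < z then β * (z - q) else (1 - β) * (q - z)

lemma pinballLoss_eq_add_max (β q z : ℝ) : pinballLoss β q z = β * (z - q) + max (q - z) 0 := by
  unfold pinballLoss
  split_ifs with h
  · rw [max_eq_right (by linarith)]; ring
  · rw [max_eq_left (by linarith)]; ring

lemma continuous_pinballLoss (β q : ℝ) : Continuous (pinballLoss β q) := by
  simp only [funext (pinballLoss_eq_add_max β q)]
  fun_prop

lemma pinballLoss_sub_ge (β : ℝ) {a b : ℝ} (hab : a ≤ b) (z : ℝ) :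
    (b - a) * ((Iic a).indicator 1 z - β) ≤ pinballLoss β b z - pinballLoss β a z := by
  simp only [pinballLoss, indicator_apply, mem_Iic, Pi.one_apply]
  split_ifs <;> nlinarith

lemma pinballLoss_sub_le (β : ℝ) {a b : ℝ} (hab : a ≤ b) (z : ℝ) :
    pinballLoss β b z - pinballLoss β a z ≤ (b - a) * ((Iio b).indicator 1 z - β) := by
  simp only [pinballLoss, indicator_apply, mem_Iio, Pi.one_apply]
  split_ifs <;> nlinarith

section Quantile

variable {μ : Measure ℝ} [IsProbabilityMeasure μ]

lemma leftLim_cdf (x : ℝ) : Function.leftLim (cdf μ) x = μ.real (Iio x) := by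
  have h := (cdf μ).measure_Iio (tendsto_cdf_atBot μ) x
  rw [measure_cdf, sub_zero] at h
  have h0 : 0 ≤ Function.leftLim (cdf μ) x :=
    (cdf_nonneg μ (x - 1)).trans ((monotone_cdf μ).le_leftLim (by linarith))
  rw [measureReal_def, h, ENNReal.toReal_ofReal h0]

lemma exists_lt_lt_measureReal_Iic {β q : ℝ} (h : β < μ.real (Iio q)) :
    ∃ a < q, β < μ.real (Iic a) := by
  rw [← leftLim_cdf] at h
  obtain ⟨a, hβa, haq⟩ :=
    (((monotone_cdf μ).tendsto_leftLim q).eventually (lt_mem_nhds h)).and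
      self_mem_nhdsWithin |>.exists
  exact ⟨a, haq, cdf_eq_real μ a ▸ hβa⟩

lemma exists_gt_measureReal_Iic_lt {β q : ℝ} (h : μ.real (Iic q) < β) :
    ∃ b > q, μ.real (Iic b) < β := by
  rw [← cdf_eq_real] at h
  obtain ⟨b, hbβ, hqb⟩ :=
    (((cdf μ).right_continuous q).mono Ioi_subset_Ici_self |>.eventually (gt_mem_nhds h)).and
      self_mem_nhdsWithin |>.exists
  exact ⟨b, hqb, cdf_eq_real μ b ▸ hbβ⟩

lemma integral_mul_indicator_one_sub {s : Set ℝ} (hs : MeasurableSet s) (c β : ℝ) :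
    ∫ z, c * (s.indicator 1 z - β) ∂μ = c * (μ.real s - β) := by
  have hind : Integrable (s.indicator (1 : ℝ → ℝ)) μ := (integrable_const 1).indicator hs
  rw [integral_const_mul, integral_sub hind (integrable_const β), integral_indicator_one hs, integral_const, probReal_univ, one_smul]

lemma integrable_pinballLoss (hμ : Integrable id μ) (β q : ℝ) :
    Integrable (pinballLoss β q) μ := by
  simp only [funext (pinballLoss_eq_add_max β q)]
  exact ((hμ.sub (integrable_const q)).const_mul β).add
    (((integrable_const q).sub hμ).sup (integrable_const 0))

lemma integral_pinballLoss_sub_ge (hμ : Integrable id μ) (β : ℝ) {a b : ℝ} (hab : a ≤ b) :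
    (b - a) * (μ.real (Iic a) - β) ≤
      ∫ z, pinballLoss β b z ∂μ - ∫ z, pinballLoss β a z ∂μ := by
  rw [← integral_mul_indicator_one_sub measurableSet_Iic,
    ← integral_sub (integrable_pinballLoss hμ β b) (integrable_pinballLoss hμ β a)]
  exact integral_mono
    ((((integrable_const 1).indicator measurableSet_Iic).sub (integrable_const β)).const_mul _)
    ((integrable_pinballLoss hμ β b).sub (integrable_pinballLoss hμ β a))
    (pinballLoss_sub_ge β hab)

lemma integral_pinballLoss_sub_le (hμ : Integrable id μ) (β : ℝ) {a b : ℝ} (hab : a ≤ b) :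
    ∫ z, pinballLoss β b z ∂μ - ∫ z, pinballLoss β a z ∂μ ≤
      (b - a) * (μ.real (Iio b) - β) := by
  rw [← integral_mul_indicator_one_sub measurableSet_Iio,
    ← integral_sub (integrable_pinballLoss hμ β b) (integrable_pinballLoss hμ β a)]
  exact integral_mono
    ((integrable_pinballLoss hμ β b).sub (integrable_pinballLoss hμ β a))
    ((((integrable_const 1).indicator measurableSet_Iio).sub (integrable_const β)).const_mul _)
    (pinballLoss_sub_le β hab)

theorem forall_integral_pinballLoss_le_iff (hμ : Integrable id μ) (β q : ℝ) :
    (∀ q', ∫ z, pinballLoss β q z ∂μ ≤ ∫ z, pinballLoss β q' z ∂μ) ↔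
      μ.real (Iio q) ≤ β ∧ β ≤ μ.real (Iic q) := by
  refine ⟨fun hmin => ⟨?_, ?_⟩, fun ⟨hlt, hle⟩ q' => ?_⟩
  · by_contra! h
    obtain ⟨a, haq, hβa⟩ := exists_lt_lt_measureReal_Iic h
    have := integral_pinballLoss_sub_ge hμ β haq.le
    nlinarith [hmin a]
  · by_contra! h
    obtain ⟨b, hqb, hbβ⟩ := exists_gt_measureReal_Iic_lt h
    have := integral_pinballLoss_sub_le hμ β hqb.le
    have : μ.real (Iio b) ≤ μ.real (Iic b) := measureReal_mono Iio_subset_Iic_self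
    nlinarith [hmin b]
  · rcases le_total q q' with h | h
    · nlinarith [integral_pinballLoss_sub_ge hμ β h]
    · nlinarith [integral_pinballLoss_sub_le hμ β h]

end Quantile

/-- Characterization of the minimizers of the expected quantile (pinball) loss:
`q` minimizes `q ↦ E[ℒ^β(q, Z)]` if and only if `P(Z < q) ≤ β` and `P(Z ≤ q) ≥ β`,
i.e. `q` is a `β`-quantile of `Z`. -/
theorem pinball_minimizer_iff_quantile
    {Ω : Type*} [MeasurableSpace Ω] (P : Measure Ω) [IsProbabilityMeasure P]
    (β : ℝ) (hβ : β ∈ Set.Ioo (0 : ℝ) 1)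
    (Z : Ω → ℝ) (hZ : Integrable Z P)
    (L : ℝ → ℝ → ℝ)
    (hL : ∀ q z, L q z = if q < z then β * (z - q) else (1 - β) * (q - z))
    (q : ℝ) :
    (∀ q' : ℝ, ∫ ω, L q (Z ω) ∂P ≤ ∫ ω, L q' (Z ω) ∂P) ↔
      (P {ω | Z ω < q} ≤ ENNReal.ofReal β ∧ ENNReal.ofReal β ≤ P {ω | Z ω ≤ q}) := by
  obtain rfl : L = pinballLoss β := funext₂ hL
  have hZm := hZ.aemeasurable
  have : IsProbabilityMeasure (P.map Z) := Measure.isProbabilityMeasure_map hZm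
  have hint (r : ℝ) : ∫ ω, pinballLoss β r (Z ω) ∂P = ∫ z, pinballLoss β r z ∂P.map Z :=
    (integral_map hZm (continuous_pinballLoss β r).aestronglyMeasurable).symm
  have hIio : P {ω | Z ω < q} = P.map Z (Iio q) :=
    (Measure.map_apply_of_aemeasurable hZm measurableSet_Iio).symm
  have hIic : P {ω | Z ω ≤ q} = P.map Z (Iic q) :=
    (Measure.map_apply_of_aemeasurable hZm measurableSet_Iic).symm
  rw [hIio, hIic, ← ofReal_measureReal, ← ofReal_measureReal,
    ENNReal.ofReal_le_ofReal_iff hβ.1.le, ENNReal.ofReal_le_ofReal_iff measureReal_nonneg]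
  simp only [hint]
  exact forall_integral_pinballLoss_le_iff
    ((integrable_map_measure aestronglyMeasurable_id hZm).mpr hZ) β q
end
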